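/- If a regular uncountable cardinal κ has the 2-stationarity property, then κ is weakly Mahlo, i.e., the set of regular cardinals below κ is stationary in κ. -/
import Mathlib


open Cardinal Set

/-- `𝒫_κ(X)` : the subsets of `X` of cardinality `< κ`. -/
def Pk (κ : Cardinal.{1}) (X : Set Ordinal) : Set (Set Ordinal) :=
  {a | a ⊆ X ∧ Cardinal.mk ↥a < κ}

/-- `𝒫_κ(λ)` for an ordinal `λ` : subsets of `λ` of cardinality `< κ`. -/
def Pkl (κ : Cardinal.{0}) (l : Ordinal) : Set (Set Ordinal) :=
  Pk (Cardinal.lift.{1} κ) (Set.Iio l)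

/-- `C` is club in `P` : `C ⊆ P`, `C` is cofinal (unbounded) in `P` with respect to `⊆`,
and `C` is closed under unions of nonempty `⊆`-directed subfamilies (that land in `P`). -/
def IsClubIn (P C : Set (Set Ordinal)) : Prop :=
  C ⊆ P ∧ (∀ a ∈ P, ∃ b ∈ C, a ⊆ b) ∧
    ∀ D : Set (Set Ordinal), D ⊆ C → D.Nonempty → DirectedOn (· ⊆ ·) D →
      ⋃₀ D ∈ P → ⋃₀ D ∈ C

/-- `S` is stationary in `P` : `S` meets every club subset of `P`. -/
def IsStatIn (P S : Set (Set Ordinal)) : Prop :=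
  ∀ C, IsClubIn P C → (S ∩ C).Nonempty

/-- the cardinality `|κ ∩ a|` of the intersection of `a` with (the set of ordinals below) `κ`. -/
noncomputable def interCard (κ : Cardinal.{0}) (a : Set Ordinal) : Cardinal.{1} :=
  Cardinal.mk ↥(a ∩ Set.Iio κ.ord)

/-- `S ⊆ 𝒫_κ(λ)` is 2-stationary : for every stationary `T ⊆ 𝒫_κ(λ)` there is `a ∈ S` such
that `|κ ∩ a|` is a regular uncountable cardinal and `T ∩ 𝒫_{κ∩a}(a)` is stationary in
`𝒫_{κ∩a}(a)`. -/
def TwoStationary (κ : Cardinal.{0}) (l : Ordinal) (S : Set (Set Ordinal)) : Prop :=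
  ∀ T ⊆ Pkl κ l, IsStatIn (Pkl κ l) T →
    ∃ a ∈ S, (interCard κ a).IsRegular ∧ Cardinal.aleph0 < interCard κ a ∧
      IsStatIn (Pk (interCard κ a) a) (T ∩ Pk (interCard κ a) a)

/-- `κ` has the 2-stationarity property : `𝒫_κ(λ)` is 2-stationary in itself for all `λ ≥ κ`. -/
def TwoStatProperty (κ : Cardinal.{0}) : Prop :=
  ∀ l : Ordinal, κ.ord ≤ l → TwoStationary κ l (Pkl κ l)


/-- `C` is club in the ordinal `o` : `C ⊆ o`, `C` is unbounded in `o`, and `C` is closed under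
suprema of its nonempty subsets that stay below `o`. -/
def IsClubOrd (o : Ordinal) (C : Set Ordinal) : Prop :=
  C ⊆ Set.Iio o ∧ (∀ a < o, ∃ b ∈ C, a ≤ b) ∧
    ∀ D : Set Ordinal, D ⊆ C → D.Nonempty → sSup D < o → sSup D ∈ C

/-- `S` is stationary in the ordinal `o` : `S` meets every club subset of `o`. -/
def IsStatOrd (o : Ordinal) (S : Set Ordinal) : Prop :=
  ∀ C, IsClubOrd o C → (S ∩ C).Nonempty

lemma myLift_isRegular {κ : Cardinal.{0}} (h : κ.IsRegular) :
    (Cardinal.lift.{1} κ).IsRegular := by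
  constructor
  · rw [← Cardinal.lift_aleph0.{1,0}]; exact Cardinal.lift_le.2 h.1
  · rw [← Cardinal.lift_ord, ← Ordinal.lift_cof]
    exact Cardinal.lift_le.2 h.2

lemma myIsRegular_of_lift {ν : Cardinal.{0}} (h : (Cardinal.lift.{1} ν).IsRegular) :
    ν.IsRegular := by
  constructor
  · have := h.1; rw [← Cardinal.lift_aleph0.{1,0}] at this; exact Cardinal.lift_le.1 this
  · have := h.2; rw [← Cardinal.lift_ord, ← Ordinal.lift_cof] at this
    exact Cardinal.lift_le.1 this

lemma mySSup_lt_ord {κ : Cardinal.{0}} (hreg : κ.IsRegular)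
    {s : Set Ordinal} (hcard : Cardinal.mk ↥s < Cardinal.lift.{1} κ)
    (hbd : ∀ x ∈ s, x < κ.ord) : sSup s < κ.ord := by
  rcases s.eq_empty_or_nonempty with rfl | hne
  · rw [csSup_empty, Ordinal.bot_eq_zero, Cardinal.lt_ord]
    simpa using lt_of_lt_of_le Cardinal.aleph0_pos hreg.1
  obtain ⟨c, hc, hlift⟩ := Cardinal.lt_lift_iff.1 hcard
  have hmk : Cardinal.lift.{0} (Cardinal.mk ↥s) = Cardinal.lift.{1} (Cardinal.mk c.out) := by
    rw [Cardinal.lift_id', Cardinal.mk_out, hlift]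
  obtain ⟨e⟩ := Cardinal.lift_mk_eq'.1 hmk
  have hse : sSup s = ⨆ i : c.out, ((e.symm i : ↥s) : Ordinal) := by
    have : Set.range (fun i : c.out => ((e.symm i : ↥s) : Ordinal)) = s := by
      ext x
      constructor
      · rintro ⟨i, rfl⟩; exact (e.symm i).2
      · intro hx; exact ⟨e ⟨x, hx⟩, by simp⟩
    rw [iSup, this]
  rw [hse]
  refine Ordinal.iSup_lt_ord ?_ (fun i => hbd _ (e.symm i).2)
  rw [Cardinal.mk_out, hreg.cof_eq]
  exact hc

lemma myIio_mem_Pkl {κ : Cardinal.{0}} {β : Ordinal} (h : β < κ.ord) :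
    Set.Iio β ∈ Pkl κ κ.ord := by
  refine ⟨fun x hx => lt_trans hx h, ?_⟩
  rw [Ordinal.mk_Iio_ordinal]
  exact Cardinal.lift_lt.2 (Cardinal.lt_ord.1 h)

lemma myT_stat {κ : Cardinal.{0}} (hreg : κ.IsRegular) (hunc : Cardinal.aleph0 < κ)
    {C : Set Ordinal} (hC : IsClubOrd κ.ord C) :
    IsStatIn (Pkl κ κ.ord) {x | ∃ β ∈ C, x = Set.Iio β} := by
  rintro C' ⟨hsub, hcof, hclosed⟩
  have hlreg := myLift_isRegular hreg
  have hPkl_empty : (∅ : Set Ordinal) ∈ Pkl κ κ.ord := by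
    refine ⟨empty_subset _, ?_⟩
    rw [Cardinal.mk_emptyCollection]
    exact lt_of_lt_of_le Cardinal.aleph0_pos hlreg.1
  have step : ∀ b, b ∈ C' → ∃ β b', β ∈ C ∧ b' ∈ C' ∧ b ⊆ Set.Iio β ∧ Set.Iio β ⊆ b' := by
    intro b hb
    obtain ⟨hbsub, hbcard⟩ := hsub hb
    have hbdd : BddAbove b := ⟨κ.ord, fun x hx => (hbsub hx).le⟩
    have hsup : sSup b < κ.ord := mySSup_lt_ord hreg hbcard (fun x hx => hbsub hx)
    have h1 : sSup b < sSup b + 1 := by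
      rw [Ordinal.add_one_eq_succ]; exact Order.lt_succ _
    have hsucc : sSup b + 1 < κ.ord := by
      rw [Ordinal.add_one_eq_succ]
      exact (Cardinal.isSuccLimit_ord hreg.1).succ_lt hsup
    obtain ⟨β, hβC, hββ⟩ := hC.2.1 _ hsucc
    have hβord : β < κ.ord := hC.1 hβC
    obtain ⟨b', hb'C, hb'sub⟩ := hcof _ (myIio_mem_Pkl hβord)
    exact ⟨β, b', hβC, hb'C,
      fun x hx => lt_of_le_of_lt (le_csSup hbdd hx) (lt_of_lt_of_le h1 hββ), hb'sub⟩
  choose! F G hFC hGC hsubF hsubG using step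
  obtain ⟨a0, ha0C, -⟩ := hcof ∅ hPkl_empty
  set a : ℕ → Set Ordinal := fun n => Nat.rec a0 (fun _ prev => G prev) n with ha
  have haC : ∀ n, a n ∈ C' := by
    intro n
    induction n with
    | zero => exact ha0C
    | succ n ih => exact hGC _ ih
  have hstep1 : ∀ n, a n ⊆ Set.Iio (F (a n)) := fun n => hsubF _ (haC n)
  have hstep2 : ∀ n, Set.Iio (F (a n)) ⊆ a (n + 1) := fun n => hsubG _ (haC n)
  have hmono : Monotone a := monotone_nat_of_le_succ (fun n => (hstep1 n).trans (hstep2 n))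
  have hsU : ⋃₀ Set.range a = ⋃ n, a n := Set.sUnion_range a
  have hUlift : (⋃ n, a n) = ⋃ i : ULift.{1} ℕ, a i.down := by
    ext x
    simp only [Set.mem_iUnion]
    exact ⟨fun ⟨n, h⟩ => ⟨⟨n⟩, h⟩, fun ⟨i, h⟩ => ⟨i.down, h⟩⟩
  have hmkN : Cardinal.mk (ULift.{1} ℕ) = Cardinal.aleph0 := by
    rw [Cardinal.mk_uLift, Cardinal.mk_nat, Cardinal.lift_aleph0.{1,0}]
  have halκ : Cardinal.aleph0 < Cardinal.lift.{1} κ := by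
    rw [← Cardinal.lift_aleph0.{1,0}]; exact Cardinal.lift_lt.2 hunc
  have hcard : Cardinal.mk ↥(⋃ n, a n) < Cardinal.lift.{1} κ := by
    rw [hUlift]
    refine lt_of_le_of_lt (Cardinal.mk_iUnion_le _) ?_
    refine Cardinal.mul_lt_of_lt hlreg.1 (by rw [hmkN]; exact halκ) ?_
    refine Cardinal.iSup_lt_of_isRegular hlreg ?_ (fun i => (hsub (haC i.down)).2)
    rw [hmkN]; exact halκ
  have hUP : (⋃ n, a n) ∈ Pkl κ κ.ord :=
    ⟨Set.iUnion_subset (fun n => (hsub (haC n)).1), hcard⟩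
  have hUC' : (⋃ n, a n) ∈ C' := by
    rw [← hsU]
    refine hclosed _ (fun x ⟨n, hn⟩ => hn ▸ haC n) ⟨a 0, Set.mem_range_self 0⟩ ?_ (hsU ▸ hUP)
    rintro x ⟨m, rfl⟩ y ⟨n, rfl⟩
    exact ⟨a (max m n), Set.mem_range_self _, hmono (le_max_left m n), hmono (le_max_right m n)⟩
  set t : Ordinal := sSup (Set.range (fun n => F (a n))) with ht
  have hrne : (Set.range (fun n => F (a n))).Nonempty := ⟨F (a 0), Set.mem_range_self 0⟩
  have hrsub : Set.range (fun n => F (a n)) ⊆ C := by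
    rintro x ⟨n, rfl⟩; exact hFC _ (haC n)
  have hrbd : BddAbove (Set.range (fun n => F (a n))) :=
    ⟨κ.ord, fun x hx => (hC.1 (hrsub hx)).le⟩
  have hrcard : Cardinal.mk ↥(Set.range (fun n => F (a n))) < Cardinal.lift.{1} κ := by
    have : Set.range (fun n : ℕ => F (a n)) =
        Set.range (fun i : ULift.{1} ℕ => F (a i.down)) := by
      ext x
      exact ⟨fun ⟨n, h⟩ => ⟨⟨n⟩, h⟩, fun ⟨i, h⟩ => ⟨i.down, h⟩⟩
    rw [this]
    exact lt_of_le_of_lt Cardinal.mk_range_le (by rw [hmkN]; exact halκ)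
  have htκ : t < κ.ord := mySSup_lt_ord hreg hrcard (fun x hx => hC.1 (hrsub hx))
  have htC : t ∈ C := hC.2.2 _ hrsub hrne htκ
  have hUt : (⋃ n, a n) = Set.Iio t := by
    apply subset_antisymm
    · refine Set.iUnion_subset (fun n x hx => ?_)
      have : x < F (a n) := hstep1 n hx
      exact lt_of_lt_of_le this (le_csSup hrbd (Set.mem_range_self n))
    · intro x hx
      obtain ⟨y, ⟨n, rfl⟩, hxy⟩ := (lt_csSup_iff hrbd hrne).1 hx
      exact Set.mem_iUnion.2 ⟨n + 1, hstep2 n hxy⟩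
  exact ⟨⋃ n, a n, ⟨t, htC, hUt⟩, hUC'⟩


/-- If a regular uncountable cardinal `κ` has the 2-stationarity property, then `κ` is weakly
Mahlo, i.e. the set of regular cardinals below `κ` is stationary in `κ`. -/
theorem twoStatProperty_weaklyMahlo (κ : Cardinal.{0})
    (hreg : κ.IsRegular) (hunc : Cardinal.aleph0 < κ)
    (h2 : TwoStatProperty κ) :
    IsStatOrd κ.ord {o : Ordinal | ∃ μ : Cardinal.{0}, μ.IsRegular ∧ μ.ord = o} := by
  intro C hC
  set T : Set (Set Ordinal) := {x | ∃ β ∈ C, x = Set.Iio β} with hT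
  have hTsub : T ⊆ Pkl κ κ.ord := by
    rintro x ⟨β, hβ, rfl⟩
    exact myIio_mem_Pkl (hC.1 hβ)
  obtain ⟨a, haP, hμreg, hμunc, hstat⟩ :=
    h2 κ.ord le_rfl T hTsub (myT_stat hreg hunc hC)
  obtain ⟨hasub, hacard⟩ := haP
  set μ := interCard κ a with hμdef
  have hμ : μ = Cardinal.mk ↥a := by
    rw [hμdef, interCard, Set.inter_eq_left.2 hasub]
  -- Step A
  have stepA : ∀ γ ∈ a, ∃ β, β ∈ C ∧ Set.Iio β ⊆ a ∧
      Cardinal.mk ↥(Set.Iio β) < μ ∧ γ < β := by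
    intro γ hγ
    have hclub : IsClubIn (Pk μ a) {b | b ∈ Pk μ a ∧ γ ∈ b} := by
      refine ⟨fun b hb => hb.1, ?_, ?_⟩
      · intro b hb
        refine ⟨b ∪ {γ}, ⟨⟨Set.union_subset hb.1 (Set.singleton_subset_iff.2 hγ), ?_⟩,
          Set.mem_union_right _ rfl⟩, Set.subset_union_left⟩
        refine lt_of_le_of_lt (Cardinal.mk_union_le _ _) ?_
        rw [Cardinal.mk_singleton]
        exact Cardinal.add_lt_of_lt hμreg.1 hb.2
          (lt_of_lt_of_le Cardinal.one_lt_aleph0 hμreg.1)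
      · intro D hD hne hdir hmem
        obtain ⟨d, hd⟩ := hne
        exact ⟨hmem, Set.mem_sUnion.2 ⟨d, hd, (hD hd).2⟩⟩
    obtain ⟨x, ⟨hxT, hxPk⟩, -, hγx⟩ := hstat _ hclub
    obtain ⟨β, hβC, rfl⟩ := hxT
    exact ⟨β, hβC, hxPk.1, hxPk.2, hγx⟩
  have hane : a.Nonempty := by
    rcases a.eq_empty_or_nonempty with rfl | h
    · rw [hμ, Cardinal.mk_emptyCollection] at hμunc
      exact absurd hμunc (by simp)
    · exact h
  set B : Set Ordinal := {β | β ∈ C ∧ Set.Iio β ⊆ a ∧ Cardinal.mk ↥(Set.Iio β) < μ} with hB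
  have hBne : B.Nonempty := by
    obtain ⟨γ, hγ⟩ := hane
    obtain ⟨β, h1, h2', h3, -⟩ := stepA γ hγ
    exact ⟨β, h1, h2', h3⟩
  have hBbd : BddAbove B := ⟨κ.ord, fun β hβ => (hC.1 hβ.1).le⟩
  set δ : Ordinal := sSup B with hδ
  have haδ : a = Set.Iio δ := by
    ext γ
    constructor
    · intro hγ
      obtain ⟨β, h1, h2', h3, h4⟩ := stepA γ hγ
      exact lt_of_lt_of_le h4 (le_csSup hBbd ⟨h1, h2', h3⟩)
    · intro hγ
      obtain ⟨β, hβB, hlt⟩ := (lt_csSup_iff hBbd hBne).1 hγ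
      exact hβB.2.1 hlt
  have hδκ : δ < κ.ord := by
    rw [haδ, Ordinal.mk_Iio_ordinal] at hacard
    exact Cardinal.lt_ord.2 (Cardinal.lift_lt.1 hacard)
  have hδC : δ ∈ C := hC.2.2 B (fun β hβ => hβ.1) hBne hδκ
  have hμν : μ = Cardinal.lift.{1} δ.card := by
    rw [hμ, haδ, Ordinal.mk_Iio_ordinal]
  have hνreg : δ.card.IsRegular := myIsRegular_of_lift (hμν ▸ hμreg)
  have hord : δ.card.ord = δ := by
    refine le_antisymm (Cardinal.ord_card_le δ) ?_
    by_contra h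
    have h' : δ.card.ord < δ := lt_of_not_ge h
    have : δ.card.ord ∈ a := haδ ▸ h'
    obtain ⟨β, -, -, h3, h4⟩ := stepA _ this
    rw [Ordinal.mk_Iio_ordinal, hμν, Cardinal.lift_lt] at h3
    have : δ.card ≤ β.card := by
      have := Ordinal.card_le_card h4.le
      rwa [Cardinal.card_ord] at this
    exact absurd h3 (not_lt.2 this)
  exact ⟨δ, ⟨δ.card, hνreg, hord⟩, hδC⟩
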